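/- arXiv:1711.03600 — 2 statements merged into one kernel-verified Lean document; each statement's English description precedes it below -/
import Mathlib

section
/- For every even integer r ≥ 4 and every integer h ≥ 1, the graph obtained from AT(r,h) by deleting all vertical edges joining (i,j) and (i,j+1) for which i + j is even (parity of i taken via its representative in {0,…,r−1}) has exactly r/2 connected components, and each connected component (with its induced subgraph structure) is isomorphic to the path graph P_{4h+4} on 4h + 4 vertices. -/
/-- The armchair nanotube `AT(r,h)` with `r` columns of hexagons, each containing `h` hexagons:
vertex set `ZMod r × {0,…,2h+1}`; vertical edges join `(i,j)` and `(i,j+1)`, and horizontal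
edges join `(i,j)` and `(i+1,j)` when `i + j` is even. -/
def AT (r h : ℕ) : SimpleGraph (ZMod r × Fin (2 * h + 2)) :=
  SimpleGraph.fromRel (fun p q =>
    (p.1 = q.1 ∧ (q.2 : ℕ) = (p.2 : ℕ) + 1) ∨
    (p.2 = q.2 ∧ q.1 = p.1 + 1 ∧ Even (p.1.val + (p.2 : ℕ))))

/-- The graph obtained from `AT(r,h)` by deleting all vertical edges joining `(i,j)` and
`(i,j+1)` for which `i + j` is even. -/
def ATdelVertEven (r h : ℕ) : SimpleGraph (ZMod r × Fin (2 * h + 2)) where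
  Adj p q := (AT r h).Adj p q ∧ ¬ (p.1 = q.1 ∧ Even (p.1.val + min (p.2 : ℕ) (q.2 : ℕ)))
  symm := ⟨fun p q hpq => ⟨(AT r h).symm.symm p q hpq.1, by
    intro hc
    exact hpq.2 ⟨hc.1.symm, by rw [min_comm, ← hc.1]; exact hc.2⟩⟩⟩
  loopless := ⟨fun p hp => (AT r h).loopless.irrefl p hp.1⟩


/-!
Deleting the even vertical edges leaves every vertex `(i, j)` with at most one successor: the
vertex to its right if `i + j` is even, the vertex above it otherwise. Following successors from
`(2c, 0)` alternates right and up steps and reaches the top row after `4h + 3` steps, at a vertex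
without successor. Since `r` is even, these `r / 2` walks partition the vertex set, so the graph
is isomorphic to `r / 2` disjoint copies of `P_{4h+4}`, that is, to `⊥ □ P_{4h+4}`.
-/

namespace SimpleGraph

variable {α β V W : Type*} {H : SimpleGraph β}

lemma reachable_bot_boxProd_iff (hH : H.Preconnected) {x y : α × β} :
    ((⊥ : SimpleGraph α) □ H).Reachable x y ↔ x.1 = y.1 := by
  simp [reachable_boxProd, reachable_bot, hH x.2 y.2]

noncomputable def botBoxProdConnectedComponentEquiv [Nonempty β] (hH : H.Preconnected) :
    ((⊥ : SimpleGraph α) □ H).ConnectedComponent ≃ α where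
  toFun := ConnectedComponent.lift Prod.fst fun _ _ p _ ↦
    (reachable_bot_boxProd_iff hH).1 p.reachable
  invFun a := connectedComponentMk _ (a, Classical.arbitrary β)
  left_inv := ConnectedComponent.ind fun _ ↦
    ConnectedComponent.sound ((reachable_bot_boxProd_iff hH).2 rfl)
  right_inv _ := rfl

def induceSuppBotBoxProdIso (hH : H.Preconnected)
    (C : ((⊥ : SimpleGraph α) □ H).ConnectedComponent) :
    ((⊥ : SimpleGraph α) □ H).induce C.supp ≃g H :=
  let a : α := C.lift Prod.fst fun _ _ p _ ↦ (reachable_bot_boxProd_iff hH).1 p.reachable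
  have mem (b : β) : (a, b) ∈ C.supp := by
    induction C using ConnectedComponent.ind with
    | h x => exact ConnectedComponent.sound ((reachable_bot_boxProd_iff hH).2 rfl)
  RelIso.symm
    { toFun b := ⟨(a, b), mem b⟩
      invFun v := v.1.2
      left_inv _ := rfl
      right_inv := by
        rintro ⟨_, rfl⟩
        rfl
      map_rel_iff' := boxProd_adj_right }

def Iso.induceConnectedComponentSupp {G : SimpleGraph V} {G' : SimpleGraph W} (φ : G ≃g G')
    (C : G.ConnectedComponent) :
    G.induce C.supp ≃g G'.induce (φ.connectedComponentEquiv C).supp where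
  toEquiv := C.isoEquivSupp φ
  map_rel_iff' := φ.map_adj_iff

end SimpleGraph

section Nanotube

open SimpleGraph

variable {r h : ℕ}

def ATIsSucc (r h : ℕ) (p q : ZMod r × Fin (2 * h + 2)) : Prop :=
  if Even (p.1.val + p.2) then q.1 = p.1 + 1 ∧ q.2 = p.2 else q.1 = p.1 ∧ (q.2 : ℕ) = p.2 + 1

lemma ATIsSucc.right_unique {p q q' : ZMod r × Fin (2 * h + 2)} (hq : ATIsSucc r h p q)
    (hq' : ATIsSucc r h p q') : q = q' := by
  unfold ATIsSucc at hq hq'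
  split_ifs at hq hq'
  · exact Prod.ext (hq.1.trans hq'.1.symm) (hq.2.trans hq'.2.symm)
  · exact Prod.ext (hq.1.trans hq'.1.symm) (Fin.ext (hq.2.trans hq'.2.symm))

lemma ATdelVertEven_adj_iff (hr : 1 < r) (p q : ZMod r × Fin (2 * h + 2)) :
    (ATdelVertEven r h).Adj p q ↔ ATIsSucc r h p q ∨ ATIsSucc r h q p := by
  have : Fact (1 < r) := ⟨hr⟩
  have hne (a : ZMod r) : a + 1 ≠ a := by simp
  simp only [ATdelVertEven, AT, fromRel_adj, ATIsSucc, ne_eq, Prod.ext_iff, Fin.ext_iff,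
    Nat.even_iff]
  split_ifs <;> grind

lemma even_val_natCast_add_iff (hr : Even r) (n j : ℕ) :
    Even ((n : ZMod r).val + j) ↔ Even (n + j) := by
  rw [ZMod.val_natCast, Nat.even_add, Nat.even_add, hr.mod_even_iff]

/-- The `k`-th vertex of the `c`-th path, which starts at `(2c, 0)`. -/
def ATPathVertex (r h : ℕ) (x : Fin (r / 2) × Fin (4 * h + 4)) : ZMod r × Fin (2 * h + 2) :=
  (((2 * x.1 + (x.2 + 1) / 2 : ℕ) : ZMod r), ⟨x.2 / 2, by omega⟩)

lemma ATPathVertex_injective (hr : Even r) : Function.Injective (ATPathVertex r h) := by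
  rintro ⟨c, k⟩ ⟨c', k'⟩ hcc
  simp only [ATPathVertex, Prod.ext_iff, Fin.ext_iff, ZMod.natCast_eq_natCast_iff] at hcc
  obtain ⟨hcol, hrow⟩ := hcc
  -- the row determines `k / 2`, and the parity of the column (well defined as `r` is even) `k % 2`
  have hk : k = k' := Fin.ext (by have := hcol.of_dvd hr.two_dvd; unfold Nat.ModEq at this; omega)
  subst hk
  have hc := Nat.ModEq.add_right_cancel' _ hcol
  rw [Nat.ModEq, Nat.mod_eq_of_lt (by omega), Nat.mod_eq_of_lt (by omega)] at hc
  obtain rfl : c = c' := Fin.ext (by omega)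
  rfl

lemma ATPathVertex_bijective [NeZero r] (hr : Even r) : Function.Bijective (ATPathVertex r h) := by
  refine (Fintype.bijective_iff_injective_and_card _).2 ⟨ATPathVertex_injective hr, ?_⟩
  simp only [Fintype.card_prod, Fintype.card_fin, ZMod.card]
  obtain ⟨s, rfl⟩ := hr
  rw [← two_mul, Nat.mul_div_cancel_left _ two_pos]
  ring

lemma ATIsSucc_ATPathVertex_succ (hr : Even r) (c : Fin (r / 2)) {k : ℕ}
    (hk : k + 1 < 4 * h + 4) :
    ATIsSucc r h (ATPathVertex r h (c, ⟨k, by omega⟩))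
      (ATPathVertex r h (c, ⟨k + 1, hk⟩)) := by
  simp only [ATIsSucc, ATPathVertex, even_val_natCast_add_iff hr, Nat.even_iff, Fin.ext_iff]
  split_ifs
  · exact ⟨by rw [show 2 * c + (k + 1 + 1) / 2 = 2 * c + (k + 1) / 2 + 1 by omega,
      Nat.cast_succ], by omega⟩
  · exact ⟨by rw [show (k + 1 + 1) / 2 = (k + 1) / 2 by omega], by omega⟩

lemma not_ATIsSucc_ATPathVertex_last (hr : Even r) (c : Fin (r / 2))
    (q : ZMod r × Fin (2 * h + 2)) :
    ¬ ATIsSucc r h (ATPathVertex r h (c, ⟨4 * h + 3, by omega⟩)) q := by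
  simp only [ATIsSucc, ATPathVertex, even_val_natCast_add_iff hr, Nat.even_iff]
  split_ifs
  · omega
  · have := q.2.isLt
    omega

lemma ATIsSucc_ATPathVertex_iff (hr : Even r) (x y : Fin (r / 2) × Fin (4 * h + 4)) :
    ATIsSucc r h (ATPathVertex r h x) (ATPathVertex r h y) ↔
      x.1 = y.1 ∧ (x.2 : ℕ) + 1 = y.2 := by
  obtain ⟨c, k, hk⟩ := x
  constructor
  · intro hxy
    by_cases hlast : k + 1 < 4 * h + 4
    · obtain rfl := ATPathVertex_injective hr
        (hxy.right_unique (ATIsSucc_ATPathVertex_succ hr c hlast))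
      exact ⟨rfl, rfl⟩
    · obtain rfl : k = 4 * h + 3 := by omega
      exact absurd hxy (not_ATIsSucc_ATPathVertex_last hr c _)
  · obtain ⟨c', k', hk'⟩ := y
    rintro ⟨rfl, hk'' : k + 1 = k'⟩
    subst hk''
    exact ATIsSucc_ATPathVertex_succ hr c hk'

noncomputable def botBoxProdPathGraphIsoATdelVertEven (hr : 1 < r) (hre : Even r) :
    ((⊥ : SimpleGraph (Fin (r / 2))) □ pathGraph (4 * h + 4)) ≃g ATdelVertEven r h :=
  haveI : NeZero r := ⟨by omega⟩
  { toEquiv := Equiv.ofBijective _ (ATPathVertex_bijective hre)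
    map_rel_iff' := by
      intro x y
      simp only [Equiv.ofBijective_apply, ATdelVertEven_adj_iff hr, ATIsSucc_ATPathVertex_iff hre,
        boxProd_adj, pathGraph_adj, bot_adj, false_and, false_or]
      grind }

end Nanotube

theorem ATdelVertEven_components_general (r h : ℕ) (hr : 4 ≤ r) (hre : Even r) :
    Nat.card (ATdelVertEven r h).ConnectedComponent = r / 2 ∧
    ∀ c : (ATdelVertEven r h).ConnectedComponent,
      Nonempty ((ATdelVertEven r h).induce c.supp ≃g SimpleGraph.pathGraph (4 * h + 4)) := by
  let φ := (botBoxProdPathGraphIsoATdelVertEven (h := h) (by omega) hre).symm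
  have hP := SimpleGraph.pathGraph_preconnected (4 * h + 4)
  refine ⟨?_, fun C ↦ ⟨(φ.induceConnectedComponentSupp C).trans
    (SimpleGraph.induceSuppBotBoxProdIso hP _)⟩⟩
  rw [Nat.card_congr (φ.connectedComponentEquiv.trans
    (SimpleGraph.botBoxProdConnectedComponentEquiv hP)), Nat.card_eq_fintype_card,
    Fintype.card_fin]

theorem ATdelVertEven_components (r h : ℕ) (hr : 4 ≤ r) (hre : Even r) (hh : 1 ≤ h) :
    Nat.card (ATdelVertEven r h).ConnectedComponent = r / 2 ∧
    ∀ c : (ATdelVertEven r h).ConnectedComponent,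
      Nonempty ((ATdelVertEven r h).induce c.supp ≃g SimpleGraph.pathGraph (4 * h + 4)) :=
  ATdelVertEven_components_general r h hr hre
end

section
/- For every even integer r ≥ 4 and every integer h ≥ 1, the Wiener polarity index of the armchair nanotube AT(r,h) equals 9rh + r. -/
/-- The Wiener polarity index of a simple graph: the number of unordered pairs
of vertices at (shortest-path) distance `3`. -/
noncomputable def wienerPolarity {V : Type*} (G : SimpleGraph V) : ℕ :=
  Nat.card {p : Sym2 V // Sym2.lift ⟨fun u v => G.dist u v, fun _ _ => SimpleGraph.dist_comm⟩ p = 3}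

/-!
`AT(r,h)` is bipartite (colour `(i + j) mod 2`, well defined as `r` is even), and every edge joins
an even vertex `(i, j)` to one of `(i, j ± 1)`, `(i + 1, j)`. In a bipartite graph the distance is
`3` exactly when there is a walk of length three and no edge, so the vertices at distance `3` from
an even vertex `u` are the `u + d` inside the tube, for nine displacements `d` (distinct modulo `r`
because `r ≥ 4`). Every pair at distance `3` has exactly one even endpoint, and a displacement with
vertical part `k` fits at `(r / 2) (2h + 2 - |k|)` even vertices; summing over the nine
displacements gives `(r / 2) (18h + 2) = 9rh + r`.
-/

open Finset

namespace SimpleGraph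

variable {V : Type*} {G : SimpleGraph V} {u v : V}

theorem Coloring.ne_of_odd_dist (c : G.Coloring Bool) (h : Odd (G.dist u v)) : c u ≠ c v := by
  obtain ⟨w, hw⟩ := (Reachable.of_dist_ne_zero h.pos.ne').exists_walk_length_eq_dist
  have := (c.odd_length_iff_not_congr w).1 (hw ▸ h)
  grind

theorem Coloring.dist_eq_three_iff (c : G.Coloring Bool) :
    G.dist u v = 3 ↔ ¬G.Adj u v ∧ ∃ a b, G.Adj u a ∧ G.Adj a b ∧ G.Adj b v := by
  constructor
  · intro hd
    obtain ⟨w, hw⟩ := (Reachable.of_dist_ne_zero (hd ▸ three_ne_zero)).exists_walk_length_eq_dist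
    refine ⟨fun hadj => by simp [dist_eq_one_iff_adj.2 hadj] at hd, ?_⟩
    rw [hd] at hw
    match w, hw with
    | .cons h₁ (.cons h₂ (.cons h₃ .nil)), _ => exact ⟨_, _, h₁, h₂, h₃⟩
  · rintro ⟨hnadj, a, b, h₁, h₂, h₃⟩
    let w : G.Walk u v := .cons h₁ (.cons h₂ (.cons h₃ .nil))
    obtain ⟨p, hp⟩ := w.reachable.exists_walk_length_eq_dist
    have hodd : Odd p.length :=
      (c.odd_length_iff_not_congr p).2 ((c.odd_length_iff_not_congr w).1 ⟨1, rfl⟩)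
    have hle : G.dist u v ≤ 3 := dist_le w
    have hne : G.dist u v ≠ 1 := fun h => hnadj (dist_eq_one_iff_adj.1 h)
    obtain ⟨k, hk⟩ := hp ▸ hodd
    omega

theorem Coloring.wienerPolarity_eq_card (c : G.Coloring Bool) :
    wienerPolarity G = Nat.card {q : V × V // c q.1 = true ∧ G.dist q.1 q.2 = 3} := by
  have hne : ∀ {u v}, G.dist u v = 3 → c u ≠ c v := fun hd => c.ne_of_odd_dist (hd ▸ by decide)
  refine (Nat.card_congr (Equiv.ofBijective (fun q => ⟨s(q.1.1, q.1.2), q.2.2⟩) ⟨?_, ?_⟩)).symm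
  · intro ⟨⟨u, v⟩, hu, hd⟩ ⟨⟨u', v'⟩, hu', _⟩ hpq
    rcases Sym2.eq_iff.1 (congrArg Subtype.val hpq) with ⟨rfl, rfl⟩ | ⟨rfl, rfl⟩
    · rfl
    · exact absurd (hu.trans hu'.symm) (hne hd)
  · rintro ⟨p, hp⟩
    induction p using Sym2.ind with
    | _ u v =>
      have hd : G.dist u v = 3 := hp
      by_cases hu : c u = true
      · exact ⟨⟨(u, v), hu, hd⟩, rfl⟩
      · have hv : c v = true := by grind [hne hd]
        exact ⟨⟨(v, u), hv, dist_comm.trans hd⟩, Subtype.ext Sym2.eq_swap⟩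

theorem Coloring.wienerPolarity_eq_sum [Fintype V] (c : G.Coloring Bool) :
    wienerPolarity G = ∑ u with c u = true, #{v | G.dist u v = 3} := by
  rw [c.wienerPolarity_eq_card, Nat.card_eq_fintype_card, Fintype.card_subtype, card_filter,
    ← univ_product_univ, sum_product, sum_filter]
  refine sum_congr rfl fun u _ => ?_
  split_ifs with hu
  · rw [card_filter]
    simp [hu]
  · simp [hu]

end SimpleGraph

theorem Fin.card_filter_add_mem (n : ℕ) (k : ℤ) :
    #{j : Fin n | 0 ≤ (j : ℤ) + k ∧ (j : ℤ) + k < n} = n - k.natAbs := by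
  rcases le_or_gt 0 k with hk | hk
  · rw [← min_eq_right (Nat.sub_le n k.natAbs), ← Fin.card_filter_val_lt]
    congr 1
    ext j
    simp only [mem_filter, mem_univ, true_and]
    omega
  · have hcompl : ({j : Fin n | 0 ≤ (j : ℤ) + k ∧ (j : ℤ) + k < n} : Finset (Fin n)) =
        univ \ ({j : Fin n | (j : ℕ) < k.natAbs} : Finset (Fin n)) := by
      ext j
      simp only [mem_filter, mem_univ, true_and, mem_sdiff]
      omega
    rw [hcompl, card_univ_sdiff, Fintype.card_fin, Fin.card_filter_val_lt]
    omega

namespace AT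

/-- In the coordinates `pos`, a vertex `u` with `parity u = 0` is adjacent exactly to the vertices
`u + d`, `d ∈ evenSteps`; so a walk of length three from `u` has displacement `d₁ - e + d₃` with
`d₁, e, d₃ ∈ evenSteps`. -/
def evenSteps : Finset (ℤ × ℤ) := {(0, 1), (0, -1), (1, 0)}

def dist3Steps : Finset (ℤ × ℤ) :=
  {(2, 1), (2, -1), (1, 2), (1, -2), (-1, 2), (-1, -2), (-1, 0), (0, 3), (0, -3)}

theorem cast_fst_add_snd_of_mem_evenSteps :
    ∀ d ∈ evenSteps, ((d.1 + d.2 : ℤ) : ZMod 2) = 1 := by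
  decide

theorem sub_add_mem_dist3Steps : ∀ d₁ ∈ evenSteps, ∀ e ∈ evenSteps, ∀ d₃ ∈ evenSteps,
    d₁ - e + d₃ ∉ evenSteps → d₁ - e + d₃ ∈ dist3Steps := by decide

theorem disjoint_dist3Steps_evenSteps : Disjoint dist3Steps evenSteps := by decide

theorem sum_dist3Steps {h : ℕ} (hh : 1 ≤ h) :
    ∑ d ∈ dist3Steps, (2 * h + 2 - d.2.natAbs) = 18 * h + 2 := by
  simp [dist3Steps]
  omega

abbrev IsRow (h : ℕ) (j : ℤ) : Prop := 0 ≤ j ∧ j < 2 * h + 2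

variable {r h : ℕ} {u v : ZMod r × Fin (2 * h + 2)}

def toCylinder : ℤ × ℤ →+ ZMod r × ℤ :=
  (Int.castAddHom (ZMod r)).prodMap (AddMonoidHom.id ℤ)

@[simp]
theorem toCylinder_apply (d : ℤ × ℤ) : (toCylinder d : ZMod r × ℤ) = ((d.1 : ZMod r), d.2) :=
  rfl

theorem toCylinder_injOn (hr : 4 ≤ r) :
    Set.InjOn (toCylinder (r := r)) ↑(dist3Steps ∪ evenSteps) := by
  have hfst : ∀ d ∈ dist3Steps ∪ evenSteps, -1 ≤ d.1 ∧ d.1 ≤ 2 := by decide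
  intro d hd e he hde
  have h₁ := hfst d hd
  have h₂ := hfst e he
  obtain ⟨hde₁, hde₂⟩ := Prod.ext_iff.1 hde
  have hdvd : (r : ℤ) ∣ e.1 - d.1 := (ZMod.intCast_eq_intCast_iff_dvd_sub _ _ _).1 hde₁
  have := Int.eq_zero_of_abs_lt_dvd hdvd (abs_lt.2 ⟨by omega, by omega⟩)
  exact Prod.ext (by omega) hde₂

def pos (u : ZMod r × Fin (2 * h + 2)) : ZMod r × ℤ := (u.1, u.2)

theorem pos_injective : Function.Injective (pos : ZMod r × Fin (2 * h + 2) → ZMod r × ℤ) :=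
  fun u v huv => by
    obtain ⟨h₁, h₂⟩ := Prod.ext_iff.1 huv
    exact Prod.ext h₁ (Fin.ext (by simpa [pos] using h₂))

theorem pos_eq_add_toCylinder_iff {d : ℤ × ℤ} :
    pos v = pos u + toCylinder d ↔ v.1 = u.1 + d.1 ∧ (v.2 : ℤ) = u.2 + d.2 :=
  Prod.ext_iff

theorem exists_pos_eq {p : ZMod r × ℤ} (hp : IsRow h p.2) :
    ∃ u : ZMod r × Fin (2 * h + 2), pos u = p :=
  ⟨(p.1, ⟨p.2.toNat, by omega⟩), Prod.ext rfl (by simp [pos, hp.1])⟩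

def parity (u : ZMod r × Fin (2 * h + 2)) : ZMod 2 := (u.1.val + u.2 : ℕ)

theorem parity_eq_zero_iff : parity u = 0 ↔ Even (u.1.val + (u.2 : ℕ)) :=
  ZMod.natCast_eq_zero_iff_even

theorem parity_eq_of_pos_eq [NeZero r] (hr : 2 ∣ r) {d : ℤ × ℤ}
    (huv : pos v = pos u + toCylinder d) :
    parity v = parity u + ((d.1 + d.2 : ℤ) : ZMod 2) := by
  obtain ⟨h₁, h₂⟩ := pos_eq_add_toCylinder_iff.1 huv
  have hv₁ : ((v.1.val : ℕ) : ZMod 2) = u.1.val + d.1 := by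
    rw [← ZMod.cast_eq_val, h₁, ZMod.cast_add hr, ZMod.cast_intCast hr, ZMod.cast_eq_val]
  have hv₂ : ((v.2 : ℕ) : ZMod 2) = (u.2 : ℕ) + d.2 := by
    rw [← Int.cast_natCast, h₂]
    push_cast
    ring
  simp only [parity, Nat.cast_add, hv₁, hv₂, Int.cast_add]
  ring

theorem parity_eq_add_one_of_adj [NeZero r] (hr : 2 ∣ r) (huv : (AT r h).Adj u v) :
    parity v = parity u + 1 := by
  have hstep : ∀ {x y : ZMod r × Fin (2 * h + 2)},
      (x.1 = y.1 ∧ (y.2 : ℕ) = x.2 + 1) ∨ (x.2 = y.2 ∧ y.1 = x.1 + 1) →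
        parity y = parity x + 1 := by
    rintro x y (⟨h₁, h₂⟩ | ⟨h₁, h₂⟩)
    · simpa using parity_eq_of_pos_eq hr (d := (0, 1))
        (pos_eq_add_toCylinder_iff.2 ⟨by simp [h₁], by push_cast [h₂]; ring⟩)
    · simpa using parity_eq_of_pos_eq hr (d := (1, 0))
        (pos_eq_add_toCylinder_iff.2 ⟨by simp [h₂], by simp [h₁]⟩)
  rw [AT, SimpleGraph.fromRel_adj] at huv
  obtain ⟨-, (h₁ | ⟨h₁, h₂, -⟩) | (h₁ | ⟨h₁, h₂, -⟩)⟩ := huv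
  · exact hstep (.inl h₁)
  · exact hstep (.inr ⟨h₁, h₂⟩)
  · rw [hstep (.inl h₁)]; grind
  · rw [hstep (.inr ⟨h₁, h₂⟩)]; grind

def coloring [NeZero r] (hr : 2 ∣ r) : (AT r h).Coloring Bool :=
  SimpleGraph.Coloring.mk (fun u => decide (parity u = 0)) fun huv => by
    rw [parity_eq_add_one_of_adj hr huv]
    generalize parity _ = x
    revert x
    decide

theorem coloring_apply [NeZero r] (hr : 2 ∣ r) (u : ZMod r × Fin (2 * h + 2)) :
    coloring hr u = decide (parity u = 0) :=
  rfl

theorem adj_iff_of_parity_eq_zero [NeZero r] (hr : 2 ∣ r) (hu : parity u = 0) :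
    (AT r h).Adj u v ↔ ∃ d ∈ evenSteps, pos v = pos u + toCylinder d := by
  constructor
  · intro huv
    have hv := parity_eq_add_one_of_adj hr huv
    rw [AT, SimpleGraph.fromRel_adj] at huv
    obtain ⟨-, (⟨h₁, h₂⟩ | ⟨h₁, h₂, -⟩) | (⟨h₁, h₂⟩ | ⟨-, -, hv'⟩)⟩ := huv
    · exact ⟨(0, 1), by decide, pos_eq_add_toCylinder_iff.2 ⟨by simp [h₁], by push_cast [h₂]; ring⟩⟩
    · exact ⟨(1, 0), by decide, pos_eq_add_toCylinder_iff.2 ⟨by simp [h₂], by simp [h₁]⟩⟩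
    · exact ⟨(0, -1), by decide,
        pos_eq_add_toCylinder_iff.2 ⟨by simp [h₁], by push_cast [h₂]; ring⟩⟩
    · rw [parity_eq_zero_iff.2 hv', hu] at hv
      exact absurd hv (by decide)
  · rintro ⟨d, hd, huv⟩
    rw [AT, SimpleGraph.fromRel_adj]
    have hv : parity v = parity u + 1 := by
      rw [parity_eq_of_pos_eq hr huv, cast_fst_add_snd_of_mem_evenSteps d hd]
    refine ⟨fun hsame => by simp [hsame] at hv, ?_⟩
    obtain ⟨h₁, h₂⟩ := pos_eq_add_toCylinder_iff.1 huv
    simp only [evenSteps, mem_insert, mem_singleton] at hd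
    rcases hd with rfl | rfl | rfl
    · exact .inl (.inl ⟨by simpa using h₁.symm, by omega⟩)
    · exact .inr (.inl ⟨by simpa using h₁, by omega⟩)
    · exact .inl (.inr ⟨Fin.ext (by omega), by simpa using h₁, parity_eq_zero_iff.1 hu⟩)

theorem exists_mem_dist3Steps_of_dist_eq_three [NeZero r] (hr : 2 ∣ r) (hu : parity u = 0)
    (huv : (AT r h).dist u v = 3) : ∃ d ∈ dist3Steps, pos v = pos u + toCylinder d := by
  obtain ⟨hnadj, a, b, hua, hab, hbv⟩ := (coloring hr).dist_eq_three_iff.1 huv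
  have hb : parity b = 0 := by
    rw [parity_eq_add_one_of_adj hr hab, parity_eq_add_one_of_adj hr hua, hu]
    decide
  obtain ⟨d₁, hd₁, ha⟩ := (adj_iff_of_parity_eq_zero hr hu).1 hua
  obtain ⟨e, he, ha'⟩ := (adj_iff_of_parity_eq_zero hr hb).1 hab.symm
  obtain ⟨d₃, hd₃, hv⟩ := (adj_iff_of_parity_eq_zero hr hb).1 hbv
  have hsum : pos v = pos u + toCylinder (d₁ - e + d₃) := by
    rw [hv, map_add, map_sub, eq_sub_of_add_eq ha'.symm, ha]
    abel
  refine ⟨_, sub_add_mem_dist3Steps d₁ hd₁ e he d₃ hd₃ fun hmem => hnadj ?_, hsum⟩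
  exact (adj_iff_of_parity_eq_zero hr hu).2 ⟨_, hmem, hsum⟩

theorem exists_adj_adj_adj [NeZero r] (hr : 2 ∣ r) (hu : parity u = 0) (d₁ e d₃ : ℤ × ℤ)
    {d : ℤ × ℤ} (hsteps : d₁ ∈ evenSteps ∧ e ∈ evenSteps ∧ d₃ ∈ evenSteps ∧ d₁ - e + d₃ = d)
    (hrows : IsRow h (u.2 + d₁.2) ∧ IsRow h (u.2 + d₁.2 - e.2))
    (hv : pos v = pos u + toCylinder d) :
    ∃ a b, (AT r h).Adj u a ∧ (AT r h).Adj a b ∧ (AT r h).Adj b v := by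
  obtain ⟨hd₁, he, hd₃, rfl⟩ := hsteps
  obtain ⟨a, ha⟩ := exists_pos_eq (p := pos u + toCylinder d₁) (by simpa [pos] using hrows.1)
  obtain ⟨b, hb⟩ := exists_pos_eq (p := pos u + toCylinder (d₁ - e))
    (by simpa [pos, add_sub_assoc] using hrows.2)
  have hb₀ : parity b = 0 := by
    rw [parity_eq_of_pos_eq hr hb, hu, zero_add, Prod.fst_sub, Prod.snd_sub,
      show d₁.1 - e.1 + (d₁.2 - e.2) = (d₁.1 + d₁.2) - (e.1 + e.2) by ring, Int.cast_sub,
      cast_fst_add_snd_of_mem_evenSteps d₁ hd₁, cast_fst_add_snd_of_mem_evenSteps e he,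
      sub_self]
  refine ⟨a, b, (adj_iff_of_parity_eq_zero hr hu).2 ⟨d₁, hd₁, ha⟩,
    ((adj_iff_of_parity_eq_zero hr hb₀).2 ⟨e, he, ?_⟩).symm,
    (adj_iff_of_parity_eq_zero hr hb₀).2 ⟨d₃, hd₃, ?_⟩⟩
  · rw [ha, hb, map_sub]
    abel
  · rw [hv, hb, map_add, map_sub]
    abel

theorem dist_eq_three_iff [NeZero r] (hr₄ : 4 ≤ r) (hr : 2 ∣ r) (hu : parity u = 0) :
    (AT r h).dist u v = 3 ↔ ∃ d ∈ dist3Steps, pos v = pos u + toCylinder d := by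
  refine ⟨exists_mem_dist3Steps_of_dist_eq_three hr hu, fun ⟨d, hd, hv⟩ =>
    (coloring hr).dist_eq_three_iff.2 ⟨?_, ?_⟩⟩
  · rw [adj_iff_of_parity_eq_zero hr hu]
    rintro ⟨e, he, hv'⟩
    have hde : d = e := toCylinder_injOn hr₄ (mem_union_left _ hd) (mem_union_right _ he)
      (add_left_cancel (hv.symm.trans hv'))
    exact disjoint_left.1 disjoint_dist3Steps_evenSteps hd (hde ▸ he)
  · have h₂ := (pos_eq_add_toCylinder_iff.1 hv).2
    have := u.2.isLt
    have := v.2.isLt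
    simp only [dist3Steps, mem_insert, mem_singleton] at hd
    rcases hd with rfl | rfl | rfl | rfl | rfl | rfl | rfl | rfl | rfl
    · exact exists_adj_adj_adj hr hu (1, 0) (0, -1) (1, 0) (by decide)
        (by dsimp only at h₂ ⊢; omega) hv
    · exact exists_adj_adj_adj hr hu (1, 0) (0, 1) (1, 0) (by decide)
        (by dsimp only at h₂ ⊢; omega) hv
    · exact exists_adj_adj_adj hr hu (1, 0) (0, -1) (0, 1) (by decide)
        (by dsimp only at h₂ ⊢; omega) hv
    · exact exists_adj_adj_adj hr hu (1, 0) (0, 1) (0, -1) (by decide)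
        (by dsimp only at h₂ ⊢; omega) hv
    · exact exists_adj_adj_adj hr hu (0, 1) (1, 0) (0, 1) (by decide)
        (by dsimp only at h₂ ⊢; omega) hv
    · exact exists_adj_adj_adj hr hu (0, -1) (1, 0) (0, -1) (by decide)
        (by dsimp only at h₂ ⊢; omega) hv
    · rcases lt_or_ge (u.2 : ℕ) (2 * h + 1) with hup | hdown
      · exact exists_adj_adj_adj hr hu (0, 1) (1, 0) (0, -1) (by decide)
          (by dsimp only; omega) hv
      · exact exists_adj_adj_adj hr hu (0, -1) (1, 0) (0, 1) (by decide)
          (by dsimp only; omega) hv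
    · exact exists_adj_adj_adj hr hu (0, 1) (0, -1) (0, 1) (by decide)
        (by dsimp only at h₂ ⊢; omega) hv
    · exact exists_adj_adj_adj hr hu (0, -1) (0, 1) (0, -1) (by decide)
        (by dsimp only at h₂ ⊢; omega) hv

theorem card_dist_eq_three [NeZero r] (hr₄ : 4 ≤ r) (hr : 2 ∣ r) (hu : parity u = 0) :
    #{v | (AT r h).dist u v = 3} = #{d ∈ dist3Steps | IsRow h (u.2 + d.2)} := by
  set S := {d ∈ dist3Steps | IsRow h (u.2 + d.2)}
  let vertexAt (d : ℤ × ℤ) (hd : d ∈ S) : ZMod r × Fin (2 * h + 2) :=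
    (u.1 + d.1, ⟨(u.2 + d.2).toNat, by have := (mem_filter.1 hd).2; omega⟩)
  have hpos : ∀ d hd, pos (vertexAt d hd) = pos u + toCylinder d := fun d hd =>
    pos_eq_add_toCylinder_iff.2 ⟨rfl, by have := (mem_filter.1 hd).2; simp [vertexAt]; omega⟩
  symm
  refine card_bij vertexAt (fun d hd => ?_) (fun d hd d' hd' hdd' => ?_) (fun v hv => ?_)
  · exact mem_filter.2
      ⟨mem_univ _, (dist_eq_three_iff hr₄ hr hu).2 ⟨d, (mem_filter.1 hd).1, hpos d hd⟩⟩
  · have := congrArg pos hdd'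
    rw [hpos d hd, hpos d' hd'] at this
    exact toCylinder_injOn hr₄ (mem_union_left _ (mem_filter.1 hd).1)
      (mem_union_left _ (mem_filter.1 hd').1) (add_left_cancel this)
  · obtain ⟨d, hd, hv⟩ := (dist_eq_three_iff hr₄ hr hu).1 (mem_filter.1 hv).2
    have h₂ := (pos_eq_add_toCylinder_iff.1 hv).2
    have hdS : d ∈ S := mem_filter.2 ⟨hd, by omega, by omega⟩
    exact ⟨d, hdS, pos_injective ((hpos d hdS).trans hv.symm)⟩

theorem card_parity_eq_zero_row [NeZero r] (hr : 2 ∣ r) (j : Fin (2 * h + 2)) :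
    #{i : ZMod r | parity (i, j) = 0} = r / 2 := by
  have hshift : ∀ i : ZMod r, parity (i + 1, j) = parity (i, j) + 1 := fun i => by
    simpa using parity_eq_of_pos_eq hr (u := (i, j)) (d := (1, 0)) (by simp [pos])
  have hswap : #{i : ZMod r | parity (i, j) = 0} = #{i : ZMod r | ¬parity (i, j) = 0} := by
    refine card_equiv (Equiv.addRight 1) fun i => ?_
    simp only [mem_filter, mem_univ, true_and, Equiv.coe_addRight, hshift]
    generalize parity (i, j) = x
    revert x
    decide
  have := card_filter_add_card_filter_not (s := univ) (fun i : ZMod r => parity (i, j) = 0)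
  rw [card_univ, ZMod.card] at this
  omega

theorem card_parity_eq_zero_and_add_mem [NeZero r] (hr : 2 ∣ r) (k : ℤ) :
    #{u : ZMod r × Fin (2 * h + 2) | parity u = 0 ∧ IsRow h (u.2 + k)} =
      r / 2 * (2 * h + 2 - k.natAbs) := by
  rw [card_filter, ← univ_product_univ, sum_product_right]
  calc ∑ j : Fin (2 * h + 2), ∑ i : ZMod r, (if parity (i, j) = 0 ∧ IsRow h (j + k) then 1 else 0)
      = ∑ j : Fin (2 * h + 2), if IsRow h (j + k) then r / 2 else 0 :=
        sum_congr rfl fun j _ => by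
          split_ifs with hj
          · rw [← card_parity_eq_zero_row hr j, card_filter]
            simp only [and_iff_left hj]
          · simp [hj]
    _ = r / 2 * (2 * h + 2 - k.natAbs) := by
        have hrow := Fin.card_filter_add_mem (2 * h + 2) k
        push_cast at hrow
        rw [← sum_filter, sum_const, smul_eq_mul, mul_comm, hrow]

end AT

theorem wienerPolarity_AT (r h : ℕ) (hr : 4 ≤ r) (hre : Even r) (hh : 1 ≤ h) :
    wienerPolarity (AT r h) = 9 * r * h + r := by
  have : NeZero r := ⟨by omega⟩
  have hr₂ := hre.two_dvd
  calc wienerPolarity (AT r h)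
      = ∑ u with AT.parity u = 0, #{d ∈ AT.dist3Steps | AT.IsRow h (u.2 + d.2)} := by
        rw [(AT.coloring hr₂).wienerPolarity_eq_sum]
        exact sum_congr (by ext; simp [AT.coloring_apply]) fun u hu =>
          AT.card_dist_eq_three hr hr₂ (by simpa using hu)
    _ = ∑ d ∈ AT.dist3Steps,
          #{u : ZMod r × Fin (2 * h + 2) | AT.parity u = 0 ∧ AT.IsRow h (u.2 + d.2)} := by
        simpa only [bipartiteAbove, bipartiteBelow, filter_filter] using
          sum_card_bipartiteAbove_eq_sum_card_bipartiteBelow (s := {u | AT.parity u = 0})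
            (t := AT.dist3Steps) fun u d => AT.IsRow h (u.2 + d.2)
    _ = ∑ d ∈ AT.dist3Steps, r / 2 * (2 * h + 2 - d.2.natAbs) :=
        sum_congr rfl fun d _ => AT.card_parity_eq_zero_and_add_mem hr₂ d.2
    _ = 9 * r * h + r := by
        rw [← mul_sum, AT.sum_dist3Steps hh]
        obtain ⟨m, rfl⟩ := hre
        rw [show (m + m) / 2 = m by omega]
        ring
end
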